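/- For any convex TU game v and any permutation π of N, the marginal contribution vector (m_i(π))_{i∈N} is an efficient allocation lying in the core of v. -/
import Mathlib


/-- The set of predecessors of `i` in the order given by the permutation `π`. -/
def predecessors {n : ℕ} (π : Equiv.Perm (Fin n)) (i : Fin n) : Finset (Fin n) :=
  Finset.univ.filter (fun j => π.symm j < π.symm i)

/-- Level sets of the order induced by `π`. -/
def levelSet {n : ℕ} (π : Equiv.Perm (Fin n)) (k : ℕ) : Finset (Fin n) :=
  Finset.univ.filter (fun j => (π.symm j : ℕ) < k)

lemma predecessors_eq_levelSet {n : ℕ} (π : Equiv.Perm (Fin n)) (i : Fin n) :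
    predecessors π i = levelSet π (π.symm i) := by
  ext j
  simp only [predecessors, levelSet, Finset.mem_filter, Finset.mem_univ, true_and, Fin.lt_def]

lemma insert_predecessors_eq_levelSet {n : ℕ} (π : Equiv.Perm (Fin n)) (i : Fin n) :
    insert i (predecessors π i) = levelSet π ((π.symm i : ℕ) + 1) := by
  ext j
  simp only [Finset.mem_insert, predecessors, levelSet, Finset.mem_filter,
    Finset.mem_univ, true_and, Fin.lt_def, Nat.lt_succ_iff]
  constructor
  · rintro (rfl | h)
    · exact le_rfl
    · exact h.le
  · intro h
    rcases eq_or_lt_of_le h with h | h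
    · left
      have : π.symm j = π.symm i := Fin.ext h
      exact π.symm.injective this
    · right; exact h

lemma not_mem_predecessors {n : ℕ} (π : Equiv.Perm (Fin n)) (i : Fin n) :
    i ∉ predecessors π i := by
  simp [predecessors]

lemma convex_mono {n : ℕ} (v : Finset (Fin n) → ℝ)
    (hconv : ∀ A B : Finset (Fin n), v A + v B ≤ v (A ∪ B) + v (A ∩ B))
    {C D : Finset (Fin n)} {i : Fin n} (hCD : C ⊆ D) (hi : i ∉ D) :
    v (insert i C) - v C ≤ v (insert i D) - v D := by
  have h := hconv (insert i C) D
  have hu : insert i C ∪ D = insert i D := by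
    ext j; simp only [Finset.mem_union, Finset.mem_insert]
    constructor
    · rintro ((rfl | h) | h)
      · exact Or.inl rfl
      · exact Or.inr (hCD h)
      · exact Or.inr h
    · rintro (rfl | h)
      · exact Or.inl (Or.inl rfl)
      · exact Or.inr h
  have hint : insert i C ∩ D = C := by
    ext j; simp only [Finset.mem_inter, Finset.mem_insert]
    constructor
    · rintro ⟨rfl | h, hD⟩
      · exact absurd hD hi
      · exact h
    · intro h; exact ⟨Or.inr h, hCD h⟩
  rw [hu, hint] at h
  linarith

/-- For a convex TU game `v` and any permutation `π` of the players, the marginal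
contribution vector along `π` is an efficient allocation lying in the core of `v`. -/
theorem marginal_vector_in_core {n : ℕ} (v : Finset (Fin n) → ℝ) (h0 : v ∅ = 0)
    (hconv : ∀ A B : Finset (Fin n), v A + v B ≤ v (A ∪ B) + v (A ∩ B))
    (π : Equiv.Perm (Fin n)) :
    (∑ i : Fin n, (v (insert i (predecessors π i)) - v (predecessors π i))
        = v Finset.univ) ∧
    ∀ A : Finset (Fin n),
      v A ≤ ∑ i ∈ A, (v (insert i (predecessors π i)) - v (predecessors π i)) := by
  constructor
  · -- efficiency
    have h1 : ∀ i : Fin n,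
        v (insert i (predecessors π i)) - v (predecessors π i)
          = v (levelSet π ((π.symm i : ℕ) + 1)) - v (levelSet π (π.symm i)) := by
      intro i
      rw [insert_predecessors_eq_levelSet, predecessors_eq_levelSet]
    calc ∑ i : Fin n, (v (insert i (predecessors π i)) - v (predecessors π i))
        = ∑ i : Fin n, (v (levelSet π ((π.symm i : ℕ) + 1)) - v (levelSet π (π.symm i))) := by
          exact Finset.sum_congr rfl (fun i _ => h1 i)
      _ = ∑ k : Fin n, (v (levelSet π ((k : ℕ) + 1)) - v (levelSet π (k : ℕ))) := by
          exact Equiv.sum_comp π.symm (fun k => v (levelSet π ((k : ℕ) + 1)) - v (levelSet π (k : ℕ)))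
      _ = ∑ k ∈ Finset.range n, (v (levelSet π (k + 1)) - v (levelSet π k)) := by
          exact Fin.sum_univ_eq_sum_range (fun k => v (levelSet π (k + 1)) - v (levelSet π k)) n
      _ = v (levelSet π n) - v (levelSet π 0) := Finset.sum_range_sub (fun k => v (levelSet π k)) n
      _ = v Finset.univ := by
          have h2 : levelSet π n = Finset.univ := by
            ext j; simp [levelSet, (π.symm j).isLt]
          have h3 : levelSet π 0 = ∅ := by
            ext j; simp [levelSet]
          rw [h2, h3, h0]; ring
  · -- core
    intro A
    induction A using Finset.strongInduction with
    | _ A ih =>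
      rcases A.eq_empty_or_nonempty with rfl | hA
      · simp [h0]
      · obtain ⟨i, hiA, hmax⟩ := A.exists_max_image (fun j => π.symm j) hA
        have hsub : A.erase i ⊆ predecessors π i := by
          intro j hj
          rw [Finset.mem_erase] at hj
          simp only [predecessors, Finset.mem_filter, Finset.mem_univ, true_and]
          have hle := hmax j hj.2
          rcases lt_or_eq_of_le hle with h | h
          · exact h
          · exact absurd (π.symm.injective h) hj.1
        have hins : insert i (A.erase i) = A := Finset.insert_erase hiA
        have hstep : v A - v (A.erase i)
            ≤ v (insert i (predecessors π i)) - v (predecessors π i) := by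
          have := convex_mono v hconv hsub (not_mem_predecessors π i)
          rwa [hins] at this
        have hih : v (A.erase i)
            ≤ ∑ j ∈ A.erase i, (v (insert j (predecessors π j)) - v (predecessors π j)) :=
          ih (A.erase i) (Finset.erase_ssubset hiA)
        have hsum : ∑ j ∈ A, (v (insert j (predecessors π j)) - v (predecessors π j))
            = (v (insert i (predecessors π i)) - v (predecessors π i))
              + ∑ j ∈ A.erase i, (v (insert j (predecessors π j)) - v (predecessors π j)) :=
          (Finset.add_sum_erase A _ hiA).symm
        linarith
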